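/- arXiv:1303.4113 — 4 statements merged into one kernel-verified Lean document; each statement's English description precedes it below -/
import Mathlib

section
/- There do not exist vectors x, y ∈ ℤ⁴ with x * x = 1, x * y = 2, y * y = 19, where * denotes the Euclidean inner product. Equivalently, the binary quadratic form x² + 4xy + 19y² is not a sum of four squares of integral linear forms. -/
/-!
If `x * x = 1` then `x = ±eᵢ` for some coordinate `i`, so `x * y = 2` forces `yᵢ = ±2`.
Then `y * y = 19` leaves `15` as a sum of the three remaining squares, impossible since `15 ≡ 7 mod 8`.
-/

open Finset

theorem Int.sum_three_mul_self_emod_eight_ne_seven (z : Fin 3 → ℤ) :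
    (∑ j, z j * z j) % 8 ≠ 7 := by
  have hcast : ((∑ j, z j * z j : ℤ) : ZMod 8) ≠ 7 := by
    simp only [Fin.sum_univ_three, Int.cast_add, Int.cast_mul]
    generalize (z 0 : ZMod 8) = a
    generalize (z 1 : ZMod 8) = b
    generalize (z 2 : ZMod 8) = c
    revert a b c
    decide
  intro h
  exact hcast (by exact_mod_cast (ZMod.intCast_eq_intCast_iff' _ 7 8).mpr h)

theorem Int.exists_eq_zero_of_sum_mul_self_eq_one {ι : Type*} [Fintype ι] {x : ι → ℤ}
    (hx : ∑ j, x j * x j = 1) : ∃ i, ∀ j ≠ i, x j = 0 := by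
  classical
  obtain ⟨i, hi⟩ : ∃ i, x i ≠ 0 := by
    by_contra! h
    simp [h] at hx
  refine ⟨i, fun j hj => ?_⟩
  have hpos : 0 < x i * x i := mul_self_pos.mpr hi
  have hrest : ∑ j ∈ univ.erase i, x j * x j = 0 := by
    have := add_sum_erase univ (fun j => x j * x j) (mem_univ i)
    have := sum_nonneg fun j (_ : j ∈ univ.erase i) => mul_self_nonneg (x j)
    omega
  rw [sum_eq_zero_iff_of_nonneg fun j _ => mul_self_nonneg (x j)] at hrest
  exact mul_self_eq_zero.mp (hrest j (mem_erase.mpr ⟨hj, mem_univ j⟩))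

/-- There are no x, y ∈ ℤ⁴ with x*x = 1, x*y = 2, y*y = 19. -/
theorem no_Z4_rep_1_2_19 :
    ¬ ∃ x y : Fin 4 → ℤ,
      (∑ i, x i * x i) = 1 ∧ (∑ i, x i * y i) = 2 ∧ (∑ i, y i * y i) = 19 := by
  rintro ⟨x, y, hx, hxy, hy⟩
  obtain ⟨i, hsupp⟩ := Int.exists_eq_zero_of_sum_mul_self_eq_one hx
  rw [sum_eq_single i (fun j _ hj => by simp [hsupp j hj]) (by simp)] at hx hxy
  have hyi : y i * y i = 4 := by
    calc y i * y i = (x i * x i) * (y i * y i) := by rw [hx, one_mul]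
      _ = (x i * y i) * (x i * y i) := by ring
      _ = 4 := by rw [hxy]; norm_num
  rw [Fin.sum_univ_succAbove _ i, hyi] at hy
  exact Int.sum_three_mul_self_emod_eight_ne_seven (fun j => y (i.succAbove j)) (by omega)
end

section
/- Let L ⊆ ℤ^(n+1) be closed under addition, and let k be a positive integer. If for all positive integers a, b, c with 2b ≥ a + c and b ≤ k there exist x, y ∈ L with x ∘ x = a, x ∘ y = b, y ∘ y = c, then for all positive integers a, b, c with b² ≥ ac and b ≤ k there exist x, y ∈ L with x ∘ x = a, x ∘ y = b, y ∘ y = c. -/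
/-!
Call `(a, b, c)` realized by `L` if some `x, y ∈ L` have Gram matrix `[[a, b], [b, c]]`.
If `(a, b - a, a + c - 2b)` is realized by `x, y`, then `(a, b, c)` is realized by `x, x + y`.
When `ac ≤ b²` but `a + c > 2b`, and `a ≤ c` (otherwise swap `x` and `y`), this shear keeps
all three entries positive, preserves `ac ≤ b²` (both sides drop by `2ab - a²`) and strictly
lowers the middle entry, so a descent on `b` ends in the linear range `a + c ≤ 2b`.
-/

open LinearMap (BilinForm)

variable {M : Type*} [AddCommGroup M]

def GramRealized (B : BilinForm ℤ M) (L : Set M) (a b c : ℤ) : Prop :=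
  ∃ x ∈ L, ∃ y ∈ L, B x x = a ∧ B x y = b ∧ B y y = c

namespace GramRealized

variable {B : BilinForm ℤ M} {L : Set M} {a b c : ℤ}

theorem swap (hB : B.IsSymm) (h : GramRealized B L a b c) : GramRealized B L c b a := by
  obtain ⟨x, hx, y, hy, hxx, hxy, hyy⟩ := h
  exact ⟨y, hy, x, hx, hyy, by rw [← hB.eq, hxy], hxx⟩

theorem of_shear (hB : B.IsSymm) (hL : ∀ x ∈ L, ∀ y ∈ L, x + y ∈ L)
    (h : GramRealized B L a (b - a) (a + c - 2 * b)) : GramRealized B L a b c := by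
  obtain ⟨x, hx, y, hy, hxx, hxy, hyy⟩ := h
  have hyx : B y x = b - a := by rw [← hB.eq, hxy]
  refine ⟨x, hx, x + y, hL x hx y hy, hxx, ?_, ?_⟩
  · rw [map_add, hxx, hxy]
    ring
  · simp only [map_add, LinearMap.add_apply, hxx, hxy, hyx, hyy]
    ring

theorem of_sq_ge (hB : B.IsSymm) (hL : ∀ x ∈ L, ∀ y ∈ L, x + y ∈ L) {k : ℤ}
    (hlin : ∀ a b c : ℤ, 0 < a → 0 < b → 0 < c → a + c ≤ 2 * b → b ≤ k →
      GramRealized B L a b c)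
    (a b c : ℤ) (ha : 0 < a) (hb : 0 < b) (hc : 0 < c) (hac : a * c ≤ b ^ 2) (hbk : b ≤ k) :
    GramRealized B L a b c := by
  by_cases hsum : a + c ≤ 2 * b
  · exact hlin a b c ha hb hc hsum hbk
  have descend : ∀ a c : ℤ, 0 < a → 0 < c → a * c ≤ b ^ 2 → 2 * b < a + c → a ≤ c →
      GramRealized B L a b c := by
    intro a c ha hc hac hsum hle
    have hab : a < b := by nlinarith
    exact of_shear hB hL (of_sq_ge hB hL hlin a (b - a) (a + c - 2 * b) ha (by omega)
      (by omega) (by nlinarith) (by omega))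
  rcases le_total a c with hle | hle
  · exact descend a c ha hc hac (by omega) hle
  · exact (descend c a hc ha (by linarith) (by omega) hle).swap hB
termination_by b.toNat
decreasing_by omega

end GramRealized

def minkowskiForm (n : ℕ) : BilinForm ℤ (Fin (n + 1) → ℤ) :=
  LinearMap.mk₂ ℤ (fun u v => u 0 * v 0 - ∑ i : Fin n, u i.succ * v i.succ)
    (fun _ _ _ => by simp only [Pi.add_apply, add_mul, Finset.sum_add_distrib]; ring)
    (fun _ _ _ => by simp only [Pi.smul_apply, smul_eq_mul, mul_assoc, ← Finset.mul_sum]; ring)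
    (fun _ _ _ => by simp only [Pi.add_apply, mul_add, Finset.sum_add_distrib]; ring)
    (fun _ _ _ => by simp only [Pi.smul_apply, smul_eq_mul, mul_left_comm, ← Finset.mul_sum]; ring)

theorem minkowskiForm_apply (n : ℕ) (u v : Fin (n + 1) → ℤ) :
    minkowskiForm n u v = u 0 * v 0 - ∑ i : Fin n, u i.succ * v i.succ :=
  rfl

theorem minkowskiForm_isSymm (n : ℕ) : (minkowskiForm n).IsSymm :=
  ⟨fun u v => by simp only [minkowskiForm_apply, mul_comm]⟩

theorem linear_complete_implies_complete_general (n : ℕ) (L : Set (Fin (n + 1) → ℤ))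
    (lor : (Fin (n + 1) → ℤ) → (Fin (n + 1) → ℤ) → ℤ)
    (hlor : ∀ u v, lor u v = u 0 * v 0 - ∑ i : Fin n, u i.succ * v i.succ)
    (hadd : ∀ x ∈ L, ∀ y ∈ L, x + y ∈ L) (k : ℤ)
    (hlin : ∀ a b c : ℤ, 0 < a → 0 < b → 0 < c → a + c ≤ 2 * b → b ≤ k →
      ∃ x ∈ L, ∃ y ∈ L, lor x x = a ∧ lor x y = b ∧ lor y y = c) :
    ∀ a b c : ℤ, 0 < a → 0 < b → 0 < c → a * c ≤ b ^ 2 → b ≤ k →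
      ∃ x ∈ L, ∃ y ∈ L, lor x x = a ∧ lor x y = b ∧ lor y y = c := by
  obtain rfl : lor = fun u v => minkowskiForm n u v := by
    funext u v
    rw [hlor, minkowskiForm_apply]
  exact GramRealized.of_sq_ge (minkowskiForm_isSymm n) hadd hlin

/-- Linear k-completeness implies k-completeness for sets closed under addition. -/
theorem linear_complete_implies_complete (n : ℕ) (L : Set (Fin (n + 1) → ℤ))
    (lor : (Fin (n + 1) → ℤ) → (Fin (n + 1) → ℤ) → ℤ)
    (hlor : ∀ u v, lor u v = u 0 * v 0 - ∑ i : Fin n, u i.succ * v i.succ)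
    (hadd : ∀ x ∈ L, ∀ y ∈ L, x + y ∈ L) (k : ℤ) (hk : 0 < k)
    (hlin : ∀ a b c : ℤ, 0 < a → 0 < b → 0 < c → a + c ≤ 2 * b → b ≤ k →
      ∃ x ∈ L, ∃ y ∈ L, lor x x = a ∧ lor x y = b ∧ lor y y = c) :
    ∀ a b c : ℤ, 0 < a → 0 < b → 0 < c → a * c ≤ b ^ 2 → b ≤ k →
      ∃ x ∈ L, ∃ y ∈ L, lor x x = a ∧ lor x y = b ∧ lor y y = c :=
  linear_complete_implies_complete_general n L lor hlor hadd k hlin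
end

section
/- For all positive integers a, b, c with b² ≥ ac, there exist x, y ∈ ℕ⁷ such that x ∘ x = a, x ∘ y = b, and y ∘ y = c, where x ∘ y := x₀y₀ − x₁y₁ − ⋯ − x₆y₆. -/
/-!
Replacing `y` by `x + y` turns a realization `(x ∘ x, x ∘ y, y ∘ y) = (a, b, c)` into one of
`(a, a + b, a + 2b + c)` and preserves the discriminant `b² - ac`; run backwards, this lowers `b`
whenever `a + c > 2b` and `a ≤ c` (swap `x`, `y` otherwise), so induction on `b` reduces
everything to the case `a + c ≤ 2b`. There, with `a = 2k + 1 - e`, `e ∈ {0, 1}`, the vectors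
`x = (k+1, k, e, 0, 0, 0, 0)` and `y = (b-k+e, b-k+e-1, e, p, q, r, s)` work, where
`p² + q² + r² + s² = 2b - a - c` by Lagrange's four-square theorem.
-/

open Matrix

def lorentz {R : Type*} [CommRing R] {n : ℕ} (x y : Fin (n + 1) → R) : R :=
  x 0 * y 0 - Fin.tail x ⬝ᵥ Fin.tail y

section Lorentz

variable {R : Type*} [CommRing R] {n : ℕ}

theorem lorentz_comm (x y : Fin (n + 1) → R) : lorentz x y = lorentz y x := by
  rw [lorentz, lorentz, mul_comm, dotProduct_comm]

theorem lorentz_add_right (x y z : Fin (n + 1) → R) :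
    lorentz x (y + z) = lorentz x y + lorentz x z := by
  rw [lorentz, lorentz, lorentz, Pi.add_apply, mul_add,
    show Fin.tail (y + z) = Fin.tail y + Fin.tail z from rfl, dotProduct_add]
  ring

theorem lorentz_add_left (x y z : Fin (n + 1) → R) :
    lorentz (x + y) z = lorentz x z + lorentz y z := by
  rw [lorentz_comm, lorentz_add_right, lorentz_comm z, lorentz_comm z]

end Lorentz

def NonnegGram (n : ℕ) (a b c : ℤ) : Prop :=
  ∃ x y : Fin (n + 1) → ℤ, (∀ i, 0 ≤ x i) ∧ (∀ i, 0 ≤ y i) ∧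
    lorentz x x = a ∧ lorentz x y = b ∧ lorentz y y = c

namespace NonnegGram

variable {n : ℕ} {a b c : ℤ}

theorem symm (h : NonnegGram n a b c) : NonnegGram n c b a := by
  obtain ⟨x, y, hx, hy, hxx, hxy, hyy⟩ := h
  exact ⟨y, x, hy, hx, hyy, lorentz_comm y x ▸ hxy, hxx⟩

theorem add_left_right (h : NonnegGram n a b c) : NonnegGram n a (a + b) (a + 2 * b + c) := by
  obtain ⟨x, y, hx, hy, hxx, hxy, hyy⟩ := h
  refine ⟨x, x + y, hx, fun i => add_nonneg (hx i) (hy i), hxx, ?_, ?_⟩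
  · rw [lorentz_add_right, hxx, hxy]
  · rw [lorentz_add_left, lorentz_add_right, lorentz_add_right, lorentz_comm y x, hxx, hxy, hyy]
    ring

end NonnegGram

theorem lt_of_add_gt_two_mul {a b c : ℤ} (hb : 0 < b) (hac : a ≤ c) (h : a * c ≤ b ^ 2)
    (hlt : 2 * b < a + c) : a < b := by
  nlinarith

theorem NonnegGram.of_mul_le_sq {n : ℕ}
    (hbase : ∀ a b c : ℤ, 0 < a → 0 < c → a + c ≤ 2 * b → NonnegGram n a b c)
    {a b c : ℤ} (ha : 0 < a) (hb : 0 < b) (hc : 0 < c) (h : a * c ≤ b ^ 2) :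
    NonnegGram n a b c := by
  rcases le_or_gt (a + c) (2 * b) with hle | hlt
  · exact hbase a b c ha hc hle
  rcases le_total a c with hac | hca
  · have hab : a < b := lt_of_add_gt_two_mul hb hac h hlt
    have hred := (NonnegGram.of_mul_le_sq hbase ha (sub_pos.2 hab) (by linarith : 0 < a - 2 * b + c)
      (by linear_combination h : a * (a - 2 * b + c) ≤ (b - a) ^ 2)).add_left_right
    convert hred using 2 <;> ring
  · have hcb : c < b := lt_of_add_gt_two_mul hb hca (by linarith) (by linarith)
    have hred := (NonnegGram.of_mul_le_sq hbase hc (sub_pos.2 hcb) (by linarith : 0 < c - 2 * b + a)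
      (by linear_combination h : c * (c - 2 * b + a) ≤ (b - c) ^ 2)).add_left_right.symm
    convert hred using 2 <;> ring
termination_by b.toNat
decreasing_by all_goals omega

theorem nonnegGram_six_of_add_le_two_mul {a b c : ℤ} (ha : 0 < a) (hc : 0 < c)
    (h : a + c ≤ 2 * b) : NonnegGram 6 a b c := by
  obtain ⟨p, q, r, s, hpqrs⟩ := Nat.sum_four_squares (2 * b - a - c).toNat
  replace hpqrs : (p : ℤ) ^ 2 + q ^ 2 + r ^ 2 + s ^ 2 = 2 * b - a - c := by
    rw [← Int.toNat_of_nonneg (by linarith : 0 ≤ 2 * b - a - c)]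
    exact_mod_cast hpqrs
  obtain ⟨k, e, he, rfl⟩ : ∃ k e : ℤ, (e = 0 ∨ e = 1) ∧ a = 2 * k + 1 - e := by
    obtain ⟨k, rfl | rfl⟩ := Int.even_or_odd' a
    exacts [⟨k, 1, .inr rfl, by ring⟩, ⟨k, 0, .inl rfl, by ring⟩]
  have hee : e * e = e := by rcases he with rfl | rfl <;> norm_num
  refine ⟨![k + 1, k, e, 0, 0, 0, 0], ![b - k + e, b - k + e - 1, e, p, q, r, s], ?_, ?_, ?_, ?_, ?_⟩
  iterate 2
    · simp only [Fin.forall_fin_succ, cons_val_zero, cons_val_succ, cons_val_fin_one, le_refl,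
        Nat.cast_nonneg, IsEmpty.forall_iff, and_true]
      omega
  all_goals simp only [lorentz, cons_val_zero, Fin.tail_vecCons, dotProduct_cons, head_cons,
    tail_cons, dotProduct_of_isEmpty, mul_zero, zero_mul, add_zero]
  · linear_combination -hee
  · linear_combination -hee
  · linear_combination -hee - hpqrs

/-- (ℕ⁷, ∘) is complete for the Lorentzian product. -/
theorem N7_complete (a b c : ℤ) (ha : 0 < a) (hb : 0 < b) (hc : 0 < c)
    (h : a * c ≤ b ^ 2) :
    ∃ x y : Fin 7 → ℤ, (∀ i, 0 ≤ x i) ∧ (∀ i, 0 ≤ y i) ∧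
      x 0 * x 0 - (∑ i : Fin 6, x i.succ * x i.succ) = a ∧
      x 0 * y 0 - (∑ i : Fin 6, x i.succ * y i.succ) = b ∧
      y 0 * y 0 - (∑ i : Fin 6, y i.succ * y i.succ) = c :=
  NonnegGram.of_mul_le_sq (fun _ _ _ => nonnegGram_six_of_add_le_two_mul)
    ha hb hc h
end

section
/- For all positive integers a, b, c with b ≥ a and b ≥ c and b² ≥ ac, there exist vectors x, y in ℤ^(n+1) (for n sufficiently large, e.g. n = 2b) with all coordinates nonnegative, x₁ = x₀ − 1, y₁ = y₀ − 1, all other coordinates of x and y in {0, 1}, such that x ∘ x = a, x ∘ y = b, y ∘ y = c under the Lorentzian product. -/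
/-!
A De Jonquières-type vector `(d, d - 1, 1, …, 1, 0, …, 0)` with `s` ones has self-product
`d² - (d - 1)² - s = 2d - 1 - s`, and two such vectors `(d, s)`, `(e, t)` whose blocks of ones
start at the same place have product `de - (d - 1)(e - 1) - min s t = d + e - 1 - min s t`.
Take `y` with `t ∈ {0, 1}` and `2e - 1 - t = c`, then `d = b + 1 + t - e` and `s = 2d - 1 - a`;
the block of `s` ones fits into the `2b - 1` free coordinates because `a + c ≤ 2b`.
-/

def lorentzProduct {n : ℕ} (x y : Fin (n + 1) → ℤ) : ℤ :=
  x 0 * y 0 - ∑ i : Fin n, x i.succ * y i.succ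

def deJonquieresVec (n d s : ℕ) (i : Fin (n + 1)) : ℤ :=
  if (i : ℕ) = 0 then d
  else if (i : ℕ) = 1 then (d : ℤ) - 1
  else if (i : ℕ) ≤ s + 1 then 1 else 0

section deJonquieresVec

variable {n d s : ℕ}

lemma deJonquieresVec_zero : deJonquieresVec n d s 0 = d := rfl

lemma deJonquieresVec_succ (i : Fin n) :
    deJonquieresVec n d s i.succ =
      if (i : ℕ) = 0 then (d : ℤ) - 1 else if (i : ℕ) ≤ s then 1 else 0 := by
  simp [deJonquieresVec]

lemma deJonquieresVec_one [NeZero n] : deJonquieresVec n d s 1 = deJonquieresVec n d s 0 - 1 := by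
  simpa [deJonquieresVec_zero] using deJonquieresVec_succ (d := d) (s := s) (0 : Fin n)

lemma deJonquieresVec_nonneg (hd : 1 ≤ d) (i : Fin (n + 1)) : 0 ≤ deJonquieresVec n d s i := by
  unfold deJonquieresVec; split_ifs <;> omega

lemma deJonquieresVec_eq_zero_or_eq_one {i : Fin (n + 1)} (hi : 2 ≤ (i : ℕ)) :
    deJonquieresVec n d s i = 0 ∨ deJonquieresVec n d s i = 1 := by
  unfold deJonquieresVec; split_ifs <;> omega

lemma lorentzProduct_deJonquieresVec {e t : ℕ} (hs : s < n) (ht : t < n) :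
    lorentzProduct (deJonquieresVec n d s) (deJonquieresVec n e t) = d + e - 1 - min s t := by
  obtain ⟨m, rfl⟩ : ∃ m, n = m + 1 := ⟨n - 1, by omega⟩
  have tail : ∀ i : Fin m,
      deJonquieresVec (m + 1) d s i.succ.succ * deJonquieresVec (m + 1) e t i.succ.succ =
        if (i : ℕ) < min s t then 1 else 0 := by
    intro i
    simp only [deJonquieresVec_succ, Fin.val_succ, Nat.add_one_ne_zero, if_false]
    split_ifs <;> omega
  rw [lorentzProduct, Fin.sum_univ_succ, Fintype.sum_congr _ _ tail, Finset.sum_boole,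
    Fin.card_filter_val_lt, deJonquieresVec_zero, deJonquieresVec_zero, deJonquieresVec_succ,
    deJonquieresVec_succ, min_eq_right (by omega : min s t ≤ m)]
  simp only [Fin.val_zero, if_true]
  push_cast
  ring

end deJonquieresVec

theorem de_jonquieres_type_representation_general (a b c : ℕ)
    (hc : 0 < c) (hab : a ≤ b) (hcb : c ≤ b) :
    ∃ x y : Fin (2 * b + 1) → ℤ,
      (∀ i, 0 ≤ x i) ∧ (∀ i, 0 ≤ y i) ∧
      x 1 = x 0 - 1 ∧ y 1 = y 0 - 1 ∧
      (∀ i : Fin (2 * b + 1), 2 ≤ (i : ℕ) → x i = 0 ∨ x i = 1) ∧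
      (∀ i : Fin (2 * b + 1), 2 ≤ (i : ℕ) → y i = 0 ∨ y i = 1) ∧
      x 0 * x 0 - (∑ i : Fin (2 * b), x i.succ * x i.succ) = (a : ℤ) ∧
      x 0 * y 0 - (∑ i : Fin (2 * b), x i.succ * y i.succ) = (b : ℤ) ∧
      y 0 * y 0 - (∑ i : Fin (2 * b), y i.succ * y i.succ) = (c : ℤ) := by
  have : NeZero (2 * b) := ⟨by omega⟩
  set t := 1 - c % 2
  set e := c / 2 + 1
  set d := b + 1 + t - e
  set s := 2 * d - 1 - a
  have hs : s < 2 * b := by omega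
  have ht : t < 2 * b := by omega
  refine ⟨deJonquieresVec (2 * b) d s, deJonquieresVec (2 * b) e t,
    deJonquieresVec_nonneg (by omega), deJonquieresVec_nonneg (by omega),
    deJonquieresVec_one, deJonquieresVec_one,
    fun _ => deJonquieresVec_eq_zero_or_eq_one, fun _ => deJonquieresVec_eq_zero_or_eq_one,
    (lorentzProduct_deJonquieresVec hs hs).trans ?_,
    (lorentzProduct_deJonquieresVec hs ht).trans ?_,
    (lorentzProduct_deJonquieresVec ht ht).trans ?_⟩ <;> omega

/-- Representation by vectors of De Jonquières type in ℤ^(2b+1). -/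
theorem de_jonquieres_type_representation (a b c : ℕ)
    (ha : 0 < a) (hb : 0 < b) (hc : 0 < c) (hab : a ≤ b) (hcb : c ≤ b)
    (h : a * c ≤ b ^ 2) :
    ∃ x y : Fin (2 * b + 1) → ℤ,
      (∀ i, 0 ≤ x i) ∧ (∀ i, 0 ≤ y i) ∧
      x 1 = x 0 - 1 ∧ y 1 = y 0 - 1 ∧
      (∀ i : Fin (2 * b + 1), 2 ≤ (i : ℕ) → x i = 0 ∨ x i = 1) ∧
      (∀ i : Fin (2 * b + 1), 2 ≤ (i : ℕ) → y i = 0 ∨ y i = 1) ∧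
      x 0 * x 0 - (∑ i : Fin (2 * b), x i.succ * x i.succ) = (a : ℤ) ∧
      x 0 * y 0 - (∑ i : Fin (2 * b), x i.succ * y i.succ) = (b : ℤ) ∧
      y 0 * y 0 - (∑ i : Fin (2 * b), y i.succ * y i.succ) = (c : ℤ) :=
  de_jonquieres_type_representation_general a b c hc hab hcb
end
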